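/- For the Painlevé III equation with three zero parameters y'' = (y')²/y - y'/x + b/x, written as y'' = P + 3Qy' + 3Ry'² + Sy'³ with P = b/x, Q = -1/(3x), R = 1/(3y), S = 0 (b ≠ 0, x > 0, y ≠ 0), one has: A = -3P·R_y - 3R·P_y - 3Q·R_x + 6Q·Q_y + P_yy - 2Q_xy + R_xx + 2PS_x + SP_x = b/(xy²), B = 0, H = -A·A_y + 4A·B_x - 3PB² + 6QAB - 3RA² = b²/(x²y⁵), N = -H/(3A) = -b/(3xy³), and the pseudoinvariant M = (6/5)N·A_y - A·N_y - (12/5)A·N·R equals b²/(15x²y⁶); consequently I₁ = M/N² = 3/5. -/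

import Mathlib

noncomputable def pdx (f : ℝ → ℝ → ℝ) (x y : ℝ) : ℝ := deriv (fun t => f t y) x
noncomputable def pdy (f : ℝ → ℝ → ℝ) (x y : ℝ) : ℝ := deriv (fun t => f x t) y

/-!
The coefficients P, Q, R, S of PIII(0,b,0,0) depend on one variable each, and S = 0, so almost
every partial derivative in the formulas for A and B vanishes: A reduces to -3P·R_y = b/(xy²)
and B to 0. Every later quantity is then of the form c(x)/yⁿ, whose y-derivative is
-n·c(x)/yⁿ⁺¹; substituting gives H, N, M, and the ratio M/N² = 3/5 is pure arithmetic.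
-/

section PartialDerivatives

variable {f : ℝ → ℝ → ℝ} {g : ℝ → ℝ}

theorem pdx_eq_zero_of_forall_eq (h : ∀ x y, f x y = g y) (x y : ℝ) : pdx f x y = 0 := by
  simp only [pdx, h, deriv_const]

theorem pdy_eq_zero_of_forall_eq (h : ∀ x y, f x y = g x) (x y : ℝ) : pdy f x y = 0 := by
  simp only [pdy, h, deriv_const]

theorem pdy_eq_deriv_of_forall_eq (h : ∀ x y, f x y = g y) (x y : ℝ) : pdy f x y = deriv g y := by
  simp only [pdy, h]

theorem pdy_eq_of_eq_div_pow {x c y : ℝ} {n : ℕ} (hf : ∀ t, t ≠ 0 → f x t = c / t ^ n)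
    (hy : y ≠ 0) : pdy f x y = -(n * c) / y ^ (n + 1) := by
  have hloc : (fun t => f x t) =ᶠ[nhds y] fun t => c * (t ^ n)⁻¹ := by
    filter_upwards [eventually_ne_nhds hy] with t ht
    rw [hf t ht, div_eq_mul_inv]
  have hderiv := ((hasDerivAt_pow n y).inv (pow_ne_zero n hy)).const_mul c
  refine (hloc.deriv_eq.trans hderiv.deriv).trans ?_
  rcases n with _ | n
  · simp
  · simp only [Nat.add_sub_cancel]
    field_simp
    ring

end PartialDerivatives

section PainleveIII

variable {b : ℝ} {P Q R S A B H N M : ℝ → ℝ → ℝ}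

theorem piii_A_eq (hP : ∀ x y, P x y = b / x) (hQ : ∀ x y, Q x y = -1 / (3 * x))
    (hR : ∀ x y, R x y = 1 / (3 * y)) (hS : ∀ x y, S x y = 0)
    (hA : ∀ x y, A x y = -3 * P x y * pdy R x y - 3 * R x y * pdy P x y
      - 3 * Q x y * pdx R x y + 6 * Q x y * pdy Q x y + pdy (pdy P) x y
      - 2 * pdx (pdy Q) x y + pdx (pdx R) x y + 2 * P x y * pdx S x y + S x y * pdx P x y)
    {x y : ℝ} (hx : x ≠ 0) (hy : y ≠ 0) : A x y = b / (x * y ^ 2) := by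
  have hPy := pdy_eq_zero_of_forall_eq (g := fun x => b / x) hP
  have hQy := pdy_eq_zero_of_forall_eq (g := fun x => -1 / (3 * x)) hQ
  have hRx := pdx_eq_zero_of_forall_eq (g := fun y => 1 / (3 * y)) hR
  have hSx := pdx_eq_zero_of_forall_eq (g := fun _ => 0) hS
  have hRy := pdy_eq_of_eq_div_pow (f := R) (x := x) (c := 1 / 3) (n := 1) (fun t _ => by rw [hR]; ring) hy
  rw [hA, hRy, hPy, hQy, hRx, hSx, hS, hP, pdy_eq_zero_of_forall_eq (g := fun _ => 0) hPy,
    pdx_eq_zero_of_forall_eq (g := fun _ => 0) hQy, pdx_eq_zero_of_forall_eq (g := fun _ => 0) hRx]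
  field_simp
  ring

theorem piii_B_eq_zero (hQ : ∀ x y, Q x y = -1 / (3 * x))
    (hR : ∀ x y, R x y = 1 / (3 * y)) (hS : ∀ x y, S x y = 0)
    (hB : ∀ x y, B x y = pdx (pdx S) x y - 2 * pdx (pdy R) x y + pdy (pdy Q) x y
      - 2 * S x y * pdy P x y - P x y * pdy S x y + 3 * S x y * pdx Q x y
      + 3 * Q x y * pdx S x y + 3 * R x y * pdy Q x y - 6 * R x y * pdx R x y)
    (x y : ℝ) : B x y = 0 := by
  have hQy := pdy_eq_zero_of_forall_eq (g := fun x => -1 / (3 * x)) hQ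
  have hRx := pdx_eq_zero_of_forall_eq (g := fun y => 1 / (3 * y)) hR
  have hSx := pdx_eq_zero_of_forall_eq (g := fun _ => 0) hS
  rw [hB, hS, hQy, hRx, hSx, pdy_eq_zero_of_forall_eq (g := fun _ => 0) hS,
    pdx_eq_zero_of_forall_eq (g := fun _ => 0) hSx, pdy_eq_zero_of_forall_eq (g := fun _ => 0) hQy,
    pdx_eq_zero_of_forall_eq (pdy_eq_deriv_of_forall_eq (g := fun y => 1 / (3 * y)) hR)]
  ring

theorem piii_H_eq (hR : ∀ x y, R x y = 1 / (3 * y))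
    (hH : ∀ x y, H x y = -A x y * pdy A x y + 4 * A x y * pdx B x y
      - 3 * P x y * (B x y) ^ 2 + 6 * Q x y * A x y * B x y - 3 * R x y * (A x y) ^ 2)
    {x y : ℝ} (hAx : ∀ t, t ≠ 0 → A x t = b / (x * t ^ 2)) (hB0 : ∀ x y, B x y = 0)
    (hx : x ≠ 0) (hy : y ≠ 0) : H x y = b ^ 2 / (x ^ 2 * y ^ 5) := by
  have hAy := pdy_eq_of_eq_div_pow (f := A) (c := b / x) (n := 2)
    (fun t ht => by rw [hAx t ht, div_mul_eq_div_div]) hy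
  rw [hH, hAy, hB0, pdx_eq_zero_of_forall_eq (g := fun _ => 0) hB0, hAx y hy, hR]
  field_simp
  ring

theorem piii_N_eq (hb : b ≠ 0) (hN : ∀ x y, N x y = -H x y / (3 * A x y)) {x y : ℝ}
    (hA : A x y = b / (x * y ^ 2)) (hH : H x y = b ^ 2 / (x ^ 2 * y ^ 5))
    (hx : x ≠ 0) (hy : y ≠ 0) : N x y = -b / (3 * x * y ^ 3) := by
  rw [hN, hH, hA]
  field_simp

theorem piii_M_eq (hR : ∀ x y, R x y = 1 / (3 * y))
    (hM : ∀ x y, M x y = (6 / 5) * N x y * pdy A x y - A x y * pdy N x y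
      - (12 / 5) * A x y * N x y * R x y)
    {x y : ℝ} (hAx : ∀ t, t ≠ 0 → A x t = b / (x * t ^ 2))
    (hNx : ∀ t, t ≠ 0 → N x t = -b / (3 * x * t ^ 3))
    (hx : x ≠ 0) (hy : y ≠ 0) : M x y = b ^ 2 / (15 * x ^ 2 * y ^ 6) := by
  have hAy := pdy_eq_of_eq_div_pow (f := A) (c := b / x) (n := 2)
    (fun t ht => by rw [hAx t ht, div_mul_eq_div_div]) hy
  have hNy := pdy_eq_of_eq_div_pow (f := N) (c := -b / (3 * x)) (n := 3)
    (fun t ht => by rw [hNx t ht, div_mul_eq_div_div]) hy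
  rw [hM, hAy, hNy, hAx y hy, hNx y hy, hR]
  field_simp
  ring

end PainleveIII

/-- for PIII(0,b,0,0) with P = b/x, Q = -1/(3x), R = 1/(3y), S = 0, b ≠ 0:
A = b/(xy²), B = 0, H = b²/(x²y⁵), N = -b/(3xy³), M = b²/(15x²y⁶) and I₁ = M/N² = 3/5. -/
theorem stmt17 (b : ℝ) (hb : b ≠ 0) (P Q R S A B H N M : ℝ → ℝ → ℝ)
    (hP : ∀ x y, P x y = b / x) (hQ : ∀ x y, Q x y = -1 / (3 * x))
    (hR : ∀ x y, R x y = 1 / (3 * y)) (hS : ∀ x y, S x y = 0)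
    (hA : ∀ x y, A x y = -3 * P x y * pdy R x y - 3 * R x y * pdy P x y
      - 3 * Q x y * pdx R x y + 6 * Q x y * pdy Q x y + pdy (pdy P) x y
      - 2 * pdx (pdy Q) x y + pdx (pdx R) x y + 2 * P x y * pdx S x y + S x y * pdx P x y)
    (hB : ∀ x y, B x y = pdx (pdx S) x y - 2 * pdx (pdy R) x y + pdy (pdy Q) x y
      - 2 * S x y * pdy P x y - P x y * pdy S x y + 3 * S x y * pdx Q x y
      + 3 * Q x y * pdx S x y + 3 * R x y * pdy Q x y - 6 * R x y * pdx R x y)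
    (hH : ∀ x y, H x y = -A x y * pdy A x y + 4 * A x y * pdx B x y
      - 3 * P x y * (B x y) ^ 2 + 6 * Q x y * A x y * B x y - 3 * R x y * (A x y) ^ 2)
    (hN : ∀ x y, N x y = -H x y / (3 * A x y))
    (hM : ∀ x y, M x y = (6 / 5) * N x y * pdy A x y - A x y * pdy N x y
      - (12 / 5) * A x y * N x y * R x y) :
    ∀ x y : ℝ, 0 < x → y ≠ 0 →
      A x y = b / (x * y ^ 2) ∧ B x y = 0 ∧
      H x y = b ^ 2 / (x ^ 2 * y ^ 5) ∧ N x y = -b / (3 * x * y ^ 3) ∧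
      M x y = b ^ 2 / (15 * x ^ 2 * y ^ 6) ∧ M x y / (N x y) ^ 2 = 3 / 5 := by
  intro x y hx hy
  have hAx : ∀ t, t ≠ 0 → A x t = b / (x * t ^ 2) := fun t ht =>
    piii_A_eq hP hQ hR hS hA hx.ne' ht
  have hB0 : ∀ x y, B x y = 0 := piii_B_eq_zero hQ hR hS hB
  have hHx : ∀ t, t ≠ 0 → H x t = b ^ 2 / (x ^ 2 * t ^ 5) := fun t ht =>
    piii_H_eq hR hH hAx hB0 hx.ne' ht
  have hNx : ∀ t, t ≠ 0 → N x t = -b / (3 * x * t ^ 3) := fun t ht =>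
    piii_N_eq hb hN (hAx t ht) (hHx t ht) hx.ne' ht
  have hMxy := piii_M_eq hR hM hAx hNx hx.ne' hy
  refine ⟨hAx y hy, hB0 x y, hHx y hy, hNx y hy, hMxy, ?_⟩
  rw [hMxy, hNx y hy]
  field_simp
  ring
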